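/- Under the conditions of the dual certificate construction (contraction constant α < 1 on ‖·‖_∞, at most d error/erasure entries per row and column with ‖M‖ ≤ ηd‖M‖_∞ for M supported on Γᶜ, incoherence ‖UVᵀ‖_∞ ≤ √(μr/(n₁n₂))), the constructed Q = Q_a + Q_b satisfies ‖P_Γ(Q)‖_∞ ≤ (1/(1−α))(√(μr/(n₁n₂)) + αγ) and ‖P_{T⊥}(Q)‖ ≤ (ηd/(1−α))(√(μr/(n₁n₂)) + γ). -/

import Mathlib

open Matrix

noncomputable section

def frobNorm {m n : ℕ} (M : Matrix (Fin m) (Fin n) ℝ) : ℝ :=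
  Real.sqrt (∑ i, ∑ j, (M i j) ^ 2)

def infNorm {m n : ℕ} (M : Matrix (Fin m) (Fin n) ℝ) : ℝ :=
  ⨆ i, ⨆ j, |M i j|

def specNorm {m n : ℕ} (M : Matrix (Fin m) (Fin n) ℝ) : ℝ :=
  ‖LinearMap.toContinuousLinearMap (Matrix.toEuclideanLin M)‖

open Classical in
def projSet {m n : ℕ} (S : Set (Fin m × Fin n)) (M : Matrix (Fin m) (Fin n) ℝ) :
    Matrix (Fin m) (Fin n) ℝ :=
  Matrix.of fun i j => if (i, j) ∈ S then M i j else 0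

def projT {n₁ n₂ r : ℕ} (U : Matrix (Fin n₁) (Fin r) ℝ) (V : Matrix (Fin n₂) (Fin r) ℝ)
    (M : Matrix (Fin n₁) (Fin n₂) ℝ) : Matrix (Fin n₁) (Fin n₂) ℝ :=
  U * Uᵀ * M + M * (V * Vᵀ) - U * Uᵀ * M * (V * Vᵀ)

def finner {m n : ℕ} (A B : Matrix (Fin m) (Fin n) ℝ) : ℝ := ∑ i, ∑ j, A i j * B i j

def opNormF {m n : ℕ} (A : Matrix (Fin m) (Fin n) ℝ →ₗ[ℝ] Matrix (Fin m) (Fin n) ℝ) : ℝ :=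
  sInf {c | 0 ≤ c ∧ ∀ Z, frobNorm (A Z) ≤ c * frobNorm Z}

open Classical in
def projSetL {m n : ℕ} (S : Set (Fin m × Fin n)) :
    Matrix (Fin m) (Fin n) ℝ →ₗ[ℝ] Matrix (Fin m) (Fin n) ℝ where
  toFun := projSet S
  map_add' A B := by
    funext i j
    simp only [projSet, Matrix.of_apply, Matrix.add_apply]
    split <;> simp
  map_smul' c A := by
    funext i j
    simp only [projSet, Matrix.of_apply, Matrix.smul_apply, RingHom.id_apply, smul_eq_mul]
    split <;> simp

open Classical in
def rowCount {m n : ℕ} (S : Set (Fin m × Fin n)) (i : Fin m) : ℕ :=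
  (Finset.univ.filter fun j => (i, j) ∈ S).card

open Classical in
def colCount {m n : ℕ} (S : Set (Fin m × Fin n)) (j : Fin n) : ℕ :=
  (Finset.univ.filter fun i => (i, j) ∈ S).card

def alphaP (μ : ℝ) (r d n₁ n₂ : ℕ) : ℝ :=
  Real.sqrt (μ * r * d / n₁) + Real.sqrt (μ * r * d / n₂) +
    Real.sqrt (μ * r * d / (max n₁ n₂ : ℕ))

def sgnM {m n : ℕ} (M : Matrix (Fin m) (Fin n) ℝ) : Matrix (Fin m) (Fin n) ℝ :=
  Matrix.of fun i j => Real.sign (M i j)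

def neumann {n₁ n₂ r : ℕ} (U : Matrix (Fin n₁) (Fin r) ℝ) (V : Matrix (Fin n₂) (Fin r) ℝ)
    (G : Set (Fin n₁ × Fin n₂)) (W : Matrix (Fin n₁) (Fin n₂) ℝ) :
    Matrix (Fin n₁) (Fin n₂) ℝ :=
  ∑' k : ℕ, (fun M => projT U V (projSet G M))^[k] W

/-!
Write `L = P_T ∘ P_G`. The hypothesis `hcontr` makes `L` an `α`-contraction for the entrywise
sup norm, so the Neumann series `S = ∑ Lᵏ` converges, `‖S W‖_∞ ≤ ‖W‖_∞ / (1 - α)` and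
`S W = W + L (S W)`. Since `M*` vanishes off `G`, the first bound is the triangle inequality.
For the second, the fixed-point equations show that `Q` differs from
`X = M* + P_G (S (P_T M*)) - P_G (UVᵀ)` by an element of the range of `P_T`, hence
`P_{T⊥} Q = (I - UUᵀ) X (I - VVᵀ)`. Both factors are orthogonal projections, so the spectral
norm is at most that of `X`, which is supported on `G`, where the `ηd` hypothesis applies.
-/

section NeumannSeries

variable {E : Type*} [NormedAddCommGroup E] [NormedSpace ℝ E] {f : E →ₗ[ℝ] E} {α : ℝ}

theorem norm_iterate_apply_le (hα0 : 0 ≤ α) (hf : ∀ x, ‖f x‖ ≤ α * ‖x‖) (x : E) (k : ℕ) :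
    ‖f^[k] x‖ ≤ α ^ k * ‖x‖ := by
  induction k with
  | zero => simp
  | succ k ih =>
    rw [Function.iterate_succ_apply', pow_succ', mul_assoc]
    exact (hf _).trans (mul_le_mul_of_nonneg_left ih hα0)

theorem norm_tsum_iterate_apply_le (hα0 : 0 ≤ α) (hα1 : α < 1) (hf : ∀ x, ‖f x‖ ≤ α * ‖x‖)
    (x : E) : ‖∑' k, f^[k] x‖ ≤ (1 - α)⁻¹ * ‖x‖ :=
  tsum_of_norm_bounded ((hasSum_geometric_of_lt_one hα0 hα1).mul_right ‖x‖)
    (norm_iterate_apply_le hα0 hf x)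

variable [CompleteSpace E]

theorem summable_iterate_apply (hα0 : 0 ≤ α) (hα1 : α < 1) (hf : ∀ x, ‖f x‖ ≤ α * ‖x‖)
    (x : E) : Summable fun k => f^[k] x :=
  .of_norm_bounded ((summable_geometric_of_lt_one hα0 hα1).mul_right ‖x‖)
    (norm_iterate_apply_le hα0 hf x)

theorem tsum_iterate_apply_eq_add (hα0 : 0 ≤ α) (hα1 : α < 1) (hf : ∀ x, ‖f x‖ ≤ α * ‖x‖)
    (x : E) : ∑' k, f^[k] x = x + f (∑' k, f^[k] x) := by
  have hsum := summable_iterate_apply hα0 hα1 hf x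
  calc ∑' k, f^[k] x = x + ∑' k, f (f^[k] x) := by
        simp only [hsum.tsum_eq_zero_add, Function.iterate_zero_apply,
          Function.iterate_succ_apply']
    _ = x + f (∑' k, f^[k] x) :=
        congrArg (x + ·) ((f.mkContinuous α hf).map_tsum hsum).symm

end NeumannSeries

section ProjT

variable {n₁ n₂ r : ℕ} (U : Matrix (Fin n₁) (Fin r) ℝ) (V : Matrix (Fin n₂) (Fin r) ℝ)

def projTL : Matrix (Fin n₁) (Fin n₂) ℝ →ₗ[ℝ] Matrix (Fin n₁) (Fin n₂) ℝ where
  toFun := projT U V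
  map_add' A B := by simp only [projT, Matrix.mul_add, Matrix.add_mul]; abel
  map_smul' c A := by simp [projT, smul_sub]

@[simp]
theorem projTL_apply (M : Matrix (Fin n₁) (Fin n₂) ℝ) : projTL U V M = projT U V M := rfl

theorem sub_projT (M : Matrix (Fin n₁) (Fin n₂) ℝ) :
    M - projT U V M = (1 - U * Uᵀ) * M * (1 - V * Vᵀ) := by
  simp only [projT, Matrix.sub_mul, Matrix.mul_sub, Matrix.one_mul, Matrix.mul_one]
  abel

variable {U V}

theorem projT_projT (hU : Uᵀ * U = 1) (hV : Vᵀ * V = 1) (M : Matrix (Fin n₁) (Fin n₂) ℝ) :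
    projT U V (projT U V M) = projT U V M := by
  have hU' : ∀ {p : ℕ} (X : Matrix (Fin r) (Fin p) ℝ), Uᵀ * (U * X) = X := fun X => by
    rw [← Matrix.mul_assoc, hU, Matrix.one_mul]
  have hV' : ∀ {p : ℕ} (X : Matrix (Fin r) (Fin p) ℝ), Vᵀ * (V * X) = X := fun X => by
    rw [← Matrix.mul_assoc, hV, Matrix.one_mul]
  simp only [projT, Matrix.mul_add, Matrix.add_mul, Matrix.mul_sub, Matrix.sub_mul,
    Matrix.mul_assoc, hU', hV']
  abel

theorem projT_mul_transpose (hU : Uᵀ * U = 1) (hV : Vᵀ * V = 1) :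
    projT U V (U * Vᵀ) = U * Vᵀ := by
  simp only [projT, Matrix.mul_assoc, ← Matrix.mul_assoc Uᵀ U, ← Matrix.mul_assoc Vᵀ V, hU, hV,
    Matrix.one_mul]
  abel

end ProjT

section InfNorm

attribute [local instance] Matrix.normedAddCommGroup Matrix.normedSpace

variable {m n : ℕ}

theorem infNorm_eq_norm (M : Matrix (Fin m) (Fin n) ℝ) : infNorm M = ‖M‖ := by
  refine le_antisymm ?_ ((Matrix.norm_le_iff ?_).2 fun i j => ?_)
  · exact Real.iSup_le (fun i => Real.iSup_le
      (fun j => Matrix.norm_entry_le_entrywise_sup_norm M) (norm_nonneg M)) (norm_nonneg M)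
  · exact Real.iSup_nonneg fun _ => Real.iSup_nonneg fun _ => abs_nonneg _
  · exact (le_ciSup (Set.finite_range _).bddAbove j).trans
      (le_ciSup (f := fun i => ⨆ j, |M i j|) (Set.finite_range _).bddAbove i)

theorem infNorm_le_of_forall_abs_le {M : Matrix (Fin m) (Fin n) ℝ} {c : ℝ} (hc : 0 ≤ c)
    (h : ∀ i j, |M i j| ≤ c) : infNorm M ≤ c := by
  rw [infNorm_eq_norm]
  exact (Matrix.norm_le_iff hc).2 h

theorem infNorm_add_le (A B : Matrix (Fin m) (Fin n) ℝ) :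
    infNorm (A + B) ≤ infNorm A + infNorm B := by
  simpa only [infNorm_eq_norm] using norm_add_le A B

theorem infNorm_sub_le (A B : Matrix (Fin m) (Fin n) ℝ) :
    infNorm (A - B) ≤ infNorm A + infNorm B := by
  simpa only [infNorm_eq_norm] using norm_sub_le A B

theorem infNorm_projSet_le (S : Set (Fin m × Fin n)) (M : Matrix (Fin m) (Fin n) ℝ) :
    infNorm (projSet S M) ≤ infNorm M := by
  classical
  rw [infNorm_eq_norm, infNorm_eq_norm]
  refine (Matrix.norm_le_iff (norm_nonneg M)).2 fun i j => ?_
  simp only [projSet, Matrix.of_apply]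
  split_ifs
  · exact Matrix.norm_entry_le_entrywise_sup_norm M
  · simp

variable {n₁ n₂ r : ℕ} {U : Matrix (Fin n₁) (Fin r) ℝ} {V : Matrix (Fin n₂) (Fin r) ℝ}
  {G : Set (Fin n₁ × Fin n₂)} {α : ℝ}

theorem norm_projTL_comp_projSetL_le
    (hcontr : ∀ W, infNorm (projT U V (projSet G W)) ≤ α * infNorm W)
    (W : Matrix (Fin n₁) (Fin n₂) ℝ) : ‖(projTL U V ∘ₗ projSetL G) W‖ ≤ α * ‖W‖ := by
  rw [← infNorm_eq_norm, ← infNorm_eq_norm]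
  exact hcontr W

theorem infNorm_neumann_le (hα0 : 0 ≤ α) (hα1 : α < 1)
    (hcontr : ∀ W, infNorm (projT U V (projSet G W)) ≤ α * infNorm W)
    (W : Matrix (Fin n₁) (Fin n₂) ℝ) :
    infNorm (neumann U V G W) ≤ (1 - α)⁻¹ * infNorm W := by
  rw [infNorm_eq_norm, infNorm_eq_norm]
  exact norm_tsum_iterate_apply_le hα0 hα1 (norm_projTL_comp_projSetL_le hcontr) W

theorem neumann_eq_add (hα0 : 0 ≤ α) (hα1 : α < 1)
    (hcontr : ∀ W, infNorm (projT U V (projSet G W)) ≤ α * infNorm W)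
    (W : Matrix (Fin n₁) (Fin n₂) ℝ) :
    neumann U V G W = W + projT U V (projSet G (neumann U V G W)) :=
  tsum_iterate_apply_eq_add hα0 hα1 (norm_projTL_comp_projSetL_le hcontr) W

end InfNorm

section SpecNorm

open scoped Matrix.Norms.L2Operator

theorem isStarProjection_mul_transpose {k r : ℕ} {U : Matrix (Fin k) (Fin r) ℝ}
    (hU : Uᵀ * U = 1) : IsStarProjection (U * Uᵀ) where
  isIdempotentElem := by
    rw [IsIdempotentElem, Matrix.mul_assoc, ← Matrix.mul_assoc Uᵀ, hU, Matrix.one_mul]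
  isSelfAdjoint := by
    rw [IsSelfAdjoint, Matrix.star_eq_conjTranspose, Matrix.conjTranspose_eq_transpose_of_trivial,
      Matrix.transpose_mul, Matrix.transpose_transpose]

theorem specNorm_one_sub_mul_transpose_le_one {k r : ℕ} {U : Matrix (Fin k) (Fin r) ℝ}
    (hU : Uᵀ * U = 1) : specNorm (1 - U * Uᵀ) ≤ 1 :=
  (isStarProjection_mul_transpose hU).one_sub.norm_le

theorem specNorm_sandwich_le {n₁ n₂ r : ℕ} {U : Matrix (Fin n₁) (Fin r) ℝ}
    {V : Matrix (Fin n₂) (Fin r) ℝ} (hU : Uᵀ * U = 1) (hV : Vᵀ * V = 1)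
    (X : Matrix (Fin n₁) (Fin n₂) ℝ) :
    specNorm ((1 - U * Uᵀ) * X * (1 - V * Vᵀ)) ≤ specNorm X :=
  calc specNorm ((1 - U * Uᵀ) * X * (1 - V * Vᵀ))
      ≤ specNorm (1 - U * Uᵀ) * specNorm X * specNorm (1 - V * Vᵀ) :=
        (Matrix.l2_opNorm_mul _ _).trans
          (mul_le_mul_of_nonneg_right (Matrix.l2_opNorm_mul _ _) (norm_nonneg _))
    _ ≤ 1 * specNorm X * 1 := by
        have hX : 0 ≤ specNorm X := norm_nonneg _
        have hPU := specNorm_one_sub_mul_transpose_le_one hU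
        have hPV := specNorm_one_sub_mul_transpose_le_one hV
        gcongr
        exact norm_nonneg _
    _ = specNorm X := by ring

end SpecNorm

section Certificate

variable {n₁ n₂ r : ℕ} {U : Matrix (Fin n₁) (Fin r) ℝ} {V : Matrix (Fin n₂) (Fin r) ℝ}

theorem projSet_compl_eq_sub {m n : ℕ} (S : Set (Fin m × Fin n))
    (M : Matrix (Fin m) (Fin n) ℝ) :
    projSet Sᶜ M = M - projSet S M := by
  classical
  ext i j
  by_cases h : (i, j) ∈ S <;> simp [projSet, h]

theorem projSet_eq_self {m n : ℕ} {S : Set (Fin m × Fin n)} {M : Matrix (Fin m) (Fin n) ℝ}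
    (hM : ∀ i j, (i, j) ∉ S → M i j = 0) : projSet S M = M := by
  classical
  ext i j
  by_cases h : (i, j) ∈ S <;> simp [projSet, h, hM]

theorem sub_projT_certificate (hU : Uᵀ * U = 1) (hV : Vᵀ * V = 1) (G : Set (Fin n₁ × Fin n₂))
    {M Y Z : Matrix (Fin n₁) (Fin n₂) ℝ}
    (hY : Y = projT U V M + projT U V (projSet G Y))
    (hZ : Z = (U * Vᵀ - projSet G (U * Vᵀ)) + projT U V (projSet G Z)) :
    (M - projSet Gᶜ Y + Z) - projT U V (M - projSet Gᶜ Y + Z) =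
      (1 - U * Uᵀ) * (M + projSet G Y - projSet G (U * Vᵀ)) * (1 - V * Vᵀ) := by
  set X := M + projSet G Y - projSet G (U * Vᵀ)
  have hQ : M - projSet Gᶜ Y + Z =
      X + projT U V (U * Vᵀ + projSet G Z - M - projSet G Y) := by
    simp only [← projTL_apply, map_sub, map_add] at hY hZ ⊢
    rw [projTL_apply, projT_mul_transpose hU hV, projSet_compl_eq_sub]
    linear_combination (norm := module) hZ - hY
  rw [← sub_projT, hQ, ← projTL_apply U V (X + _), map_add, projTL_apply, projTL_apply,
    projT_projT hU hV]
  abel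

theorem projSet_compl_certificate {G : Set (Fin n₁ × Fin n₂)} {M : Matrix (Fin n₁) (Fin n₂) ℝ}
    (hM : ∀ i j, (i, j) ∉ G → M i j = 0) (Y Z : Matrix (Fin n₁) (Fin n₂) ℝ) :
    projSet Gᶜ (M - projSet Gᶜ Y + Z) = projSet Gᶜ Z - projSet Gᶜ Y := by
  classical
  ext i j
  by_cases h : (i, j) ∈ G <;> simp [projSet, h, hM, neg_add_eq_sub]

theorem infNorm_projSet_compl_certificate_le {G : Set (Fin n₁ × Fin n₂)}
    {M : Matrix (Fin n₁) (Fin n₂) ℝ} (hM : ∀ i j, (i, j) ∉ G → M i j = 0)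
    (Y Z : Matrix (Fin n₁) (Fin n₂) ℝ) :
    infNorm (projSet Gᶜ (M - projSet Gᶜ Y + Z)) ≤ infNorm Z + infNorm Y := by
  rw [projSet_compl_certificate hM]
  exact (infNorm_sub_le _ _).trans
    (add_le_add (infNorm_projSet_le _ _) (infNorm_projSet_le _ _))

theorem specNorm_sub_projT_certificate_le (hU : Uᵀ * U = 1) (hV : Vᵀ * V = 1)
    {G : Set (Fin n₁ × Fin n₂)} {c : ℝ} (hc : 0 ≤ c)
    (hGc : ∀ X : Matrix (Fin n₁) (Fin n₂) ℝ,
      (∀ e : Fin n₁ × Fin n₂, e ∉ G → X e.1 e.2 = 0) → specNorm X ≤ c * infNorm X)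
    {M Y Z : Matrix (Fin n₁) (Fin n₂) ℝ} (hM : ∀ i j, (i, j) ∉ G → M i j = 0)
    (hY : Y = projT U V M + projT U V (projSet G Y))
    (hZ : Z = (U * Vᵀ - projSet G (U * Vᵀ)) + projT U V (projSet G Z)) :
    specNorm ((M - projSet Gᶜ Y + Z) - projT U V (M - projSet Gᶜ Y + Z)) ≤
      c * (infNorm M + infNorm Y + infNorm (U * Vᵀ)) := by
  set X := M + projSet G Y - projSet G (U * Vᵀ)
  have hXG : ∀ e : Fin n₁ × Fin n₂, e ∉ G → X e.1 e.2 = 0 := fun e he => by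
    simp [X, projSet, he, hM]
  have hX : infNorm X ≤ infNorm M + infNorm Y + infNorm (U * Vᵀ) :=
    (infNorm_sub_le _ _).trans (add_le_add ((infNorm_add_le _ _).trans
      (add_le_add le_rfl (infNorm_projSet_le _ _))) (infNorm_projSet_le _ _))
  calc _ = specNorm ((1 - U * Uᵀ) * X * (1 - V * Vᵀ)) :=
        congrArg specNorm (sub_projT_certificate hU hV G hY hZ)
    _ ≤ specNorm X := specNorm_sandwich_le hU hV X
    _ ≤ c * (infNorm M + infNorm Y + infNorm (U * Vᵀ)) :=
        (hGc X hXG).trans (mul_le_mul_of_nonneg_left hX hc)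

end Certificate

section NeumannBounds

variable {n₁ n₂ r : ℕ} {U : Matrix (Fin n₁) (Fin r) ℝ} {V : Matrix (Fin n₂) (Fin r) ℝ}
  {G : Set (Fin n₁ × Fin n₂)} {α : ℝ}

theorem infNorm_neumann_projT_le (hα0 : 0 ≤ α) (hα1 : α < 1)
    (hcontr : ∀ W, infNorm (projT U V (projSet G W)) ≤ α * infNorm W)
    {M : Matrix (Fin n₁) (Fin n₂) ℝ} (hM : ∀ i j, (i, j) ∉ G → M i j = 0) :
    infNorm (neumann U V G (projT U V M)) ≤ (1 - α)⁻¹ * (α * infNorm M) := by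
  have hα : 0 ≤ (1 - α)⁻¹ := inv_nonneg.2 (by linarith)
  refine (infNorm_neumann_le hα0 hα1 hcontr _).trans (mul_le_mul_of_nonneg_left ?_ hα)
  simpa only [projSet_eq_self hM] using hcontr M

theorem infNorm_neumann_sub_projSet_le (hα0 : 0 ≤ α) (hα1 : α < 1)
    (hcontr : ∀ W, infNorm (projT U V (projSet G W)) ≤ α * infNorm W)
    (N : Matrix (Fin n₁) (Fin n₂) ℝ) :
    infNorm (neumann U V G (N - projSet G N)) ≤ (1 - α)⁻¹ * infNorm N := by
  have hα : 0 ≤ (1 - α)⁻¹ := inv_nonneg.2 (by linarith)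
  refine (infNorm_neumann_le hα0 hα1 hcontr _).trans (mul_le_mul_of_nonneg_left ?_ hα)
  simpa only [projSet_compl_eq_sub] using infNorm_projSet_le Gᶜ N

end NeumannBounds

theorem smul_sgnM_apply_eq_zero {m n : ℕ} {S : Set (Fin m × Fin n)}
    {A : Matrix (Fin m) (Fin n) ℝ} (hA : ∀ i j, A i j ≠ 0 → (i, j) ∈ S) (γ : ℝ) :
    ∀ i j, (i, j) ∉ S → (γ • sgnM A) i j = 0 := fun i j hij => by
  have hAij : A i j = 0 := by_contra fun h => hij (hA i j h)
  simp [sgnM, hAij]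

theorem infNorm_smul_sgnM_le {m n : ℕ} {γ : ℝ} (hγ : 0 ≤ γ) (A : Matrix (Fin m) (Fin n) ℝ) :
    infNorm (γ • sgnM A) ≤ γ := by
  refine infNorm_le_of_forall_abs_le hγ fun i j => ?_
  rcases Real.sign_apply_eq (A i j) with h | h | h <;> simp [sgnM, h, abs_of_nonneg hγ, hγ]

theorem stmt16_general (n₁ n₂ r d : ℕ) (α γ η μ : ℝ)
    (hα0 : 0 ≤ α) (hα : α < 1) (hγ : 0 < γ) (hη : 0 < η)
    (U : Matrix (Fin n₁) (Fin r) ℝ) (V : Matrix (Fin n₂) (Fin r) ℝ)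
    (hU : Uᵀ * U = 1) (hV : Vᵀ * V = 1)
    (Φ G : Set (Fin n₁ × Fin n₂))
    (Astar : Matrix (Fin n₁) (Fin n₂) ℝ)
    (hsupp : ∀ i j, Astar i j ≠ 0 → (i, j) ∈ G ∧ (i, j) ∈ Φ)
    (hcontr : ∀ W, infNorm (projT U V (projSet G W)) ≤ α * infNorm W)
    (hηd : ∀ M : Matrix (Fin n₁) (Fin n₂) ℝ,
      (∀ e : Fin n₁ × Fin n₂, e ∉ G → M e.1 e.2 = 0) →
      specNorm M ≤ η * d * infNorm M)
    (hinc : infNorm (U * Vᵀ) ≤ Real.sqrt (μ * r / (n₁ * n₂))) :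
    let Mstar := γ • sgnM Astar
    let Nstar := U * Vᵀ
    let Qa := Mstar - projSet Gᶜ (neumann U V G (projT U V Mstar))
    let Qb := neumann U V G (Nstar - projSet G Nstar)
    let Q := Qa + Qb
    infNorm (projSet Gᶜ Q) ≤ (1 / (1 - α)) * (Real.sqrt (μ * r / (n₁ * n₂)) + α * γ) ∧
      specNorm (Q - projT U V Q) ≤
        (η * d / (1 - α)) * (Real.sqrt (μ * r / (n₁ * n₂)) + γ) := by
  intro Mstar Nstar Qa Qb Q
  set s := Real.sqrt (μ * r / (n₁ * n₂))
  have hs : 0 ≤ s := Real.sqrt_nonneg _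
  have hα1 : 0 < 1 - α := by linarith
  have hMG := smul_sgnM_apply_eq_zero (fun i j h => (hsupp i j h).1) γ
  have hM : infNorm Mstar ≤ γ := infNorm_smul_sgnM_le hγ.le Astar
  have hY : infNorm (neumann U V G (projT U V Mstar)) ≤ (1 - α)⁻¹ * (α * γ) :=
    (infNorm_neumann_projT_le hα0 hα hcontr hMG).trans (by gcongr)
  have hZ : infNorm (neumann U V G (Nstar - projSet G Nstar)) ≤ (1 - α)⁻¹ * s :=
    (infNorm_neumann_sub_projSet_le hα0 hα hcontr Nstar).trans (by gcongr)
  constructor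
  · calc infNorm (projSet Gᶜ Q) ≤ (1 - α)⁻¹ * s + (1 - α)⁻¹ * (α * γ) :=
          (infNorm_projSet_compl_certificate_le hMG _ _).trans (add_le_add hZ hY)
      _ = 1 / (1 - α) * (s + α * γ) := by ring
  · calc specNorm (Q - projT U V Q) ≤ η * d * (γ + (1 - α)⁻¹ * (α * γ) + s) := by
          refine (specNorm_sub_projT_certificate_le hU hV (by positivity) hηd hMG
            (neumann_eq_add hα0 hα hcontr _) (neumann_eq_add hα0 hα hcontr _)).trans ?_
          gcongr
      _ ≤ η * d / (1 - α) * (s + γ) := by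
          rw [div_mul_eq_mul_div, le_div_iff₀ hα1, mul_assoc]
          gcongr
          have hsplit : (γ + (1 - α)⁻¹ * (α * γ) + s) * (1 - α) = s + γ - α * s := by
            field_simp
            ring
          linarith [mul_nonneg hα0 hs]

theorem stmt16 (n₁ n₂ r d : ℕ) (α γ η μ : ℝ)
    (hα0 : 0 ≤ α) (hα : α < 1) (hγ : 0 < γ) (hη : 0 < η) (hη1 : η ≤ 1)
    (U : Matrix (Fin n₁) (Fin r) ℝ) (V : Matrix (Fin n₂) (Fin r) ℝ)
    (hU : Uᵀ * U = 1) (hV : Vᵀ * V = 1)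
    (Φ G : Set (Fin n₁ × Fin n₂))
    (Astar : Matrix (Fin n₁) (Fin n₂) ℝ)
    (hsupp : ∀ i j, Astar i j ≠ 0 → (i, j) ∈ G ∧ (i, j) ∈ Φ)
    (hcontr : ∀ W, infNorm (projT U V (projSet G W)) ≤ α * infNorm W)
    (hrow : ∀ i, rowCount G i ≤ d) (hcol : ∀ j, colCount G j ≤ d)
    (hηd : ∀ M : Matrix (Fin n₁) (Fin n₂) ℝ,
      (∀ e : Fin n₁ × Fin n₂, e ∉ G → M e.1 e.2 = 0) →
      specNorm M ≤ η * d * infNorm M)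
    (hinc : infNorm (U * Vᵀ) ≤ Real.sqrt (μ * r / (n₁ * n₂))) :
    let Mstar := γ • sgnM Astar
    let Nstar := U * Vᵀ
    let Qa := Mstar - projSet Gᶜ (neumann U V G (projT U V Mstar))
    let Qb := neumann U V G (Nstar - projSet G Nstar)
    let Q := Qa + Qb
    infNorm (projSet Gᶜ Q) ≤ (1 / (1 - α)) * (Real.sqrt (μ * r / (n₁ * n₂)) + α * γ) ∧
      specNorm (Q - projT U V Q) ≤
        (η * d / (1 - α)) * (Real.sqrt (μ * r / (n₁ * n₂)) + γ) :=
  stmt16_general n₁ n₂ r d α γ η μ hα0 hα hγ hη U V hU hV Φ G Astar hsupp hcontr hηd hinc
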